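/- arXiv:1904.08962 — 2 statements merged into one kernel-verified Lean document; each statement's English description precedes it below -/
import Mathlib

section
/- (Convexity in subsidy.) For each fixed belief π ∈ [0,1], each y ∈ {0,1}, and each feasible action a (a ∈ {0,1} if y = 1, a = 0 if y = 0), the functions w ↦ V_w(π, y) and w ↦ L^a_wV_w(π, y) are convex on ℝ, where V_w is the unique bounded fixed point of the Bellman operator T_w with subsidy w. -/
/-!
The Bellman operator `T_w` is monotone and shifts constants by the factor `β < 1`, so, as in
Blackwell's sufficient conditions for a contraction, its bounded fixed point lies below every
bounded `U` with `T_w U ≤ U`. Every action value is affine in the pair `(w, V)`, so `T_w V`, a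
maximum of action values, is jointly convex in `(w, V)`: hence `U = l V_a + m V_b` satisfies
`T_{l a + m b} U ≤ U`, and the comparison gives `V_{l a + m b} ≤ l V_a + m V_b`. The action values
inherit convexity in `w`, being monotone in `V` and affine in `(w, V)`.
-/

open Set

noncomputable section

/-- Expected immediate reward (success probability) at belief `π`. -/
def rhoB (ρ0 ρ1 π : ℝ) : ℝ := π * ρ0 + (1 - π) * ρ1

/-- Belief update after a play resulting in success. -/
def Gam1 (p00 p10 ρ0 ρ1 π : ℝ) : ℝ :=
  (π * ρ0 * p00 + (1 - π) * ρ1 * p10) / (π * ρ0 + (1 - π) * ρ1)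

/-- Belief update after a play resulting in failure. -/
def Gam0 (p00 p10 ρ0 ρ1 π : ℝ) : ℝ :=
  (π * (1 - ρ0) * p00 + (1 - π) * (1 - ρ1) * p10) /
    (π * (1 - ρ0) + (1 - π) * (1 - ρ1))

/-- Belief update without observation (natural Markov evolution). -/
def gam (p00 p10 π : ℝ) : ℝ := π * p00 + (1 - π) * p10

/-- Action value of playing an available arm. -/
def Lact1 (p00 p10 ρ0 ρ1 β θ11 : ℝ) (V : ℝ → Bool → ℝ) (π : ℝ) : ℝ :=
  rhoB ρ0 ρ1 π
    + β * rhoB ρ0 ρ1 π *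
        (θ11 * V (Gam1 p00 p10 ρ0 ρ1 π) true +
          (1 - θ11) * V (Gam1 p00 p10 ρ0 ρ1 π) false)
    + β * (1 - rhoB ρ0 ρ1 π) *
        (θ11 * V (Gam0 p00 p10 ρ0 ρ1 π) true +
          (1 - θ11) * V (Gam0 p00 p10 ρ0 ρ1 π) false)

/-- Action value of not playing an available arm (subsidy `w`). -/
def Lact0a (p00 p10 β w θ01 : ℝ) (V : ℝ → Bool → ℝ) (π : ℝ) : ℝ :=
  w + β * (θ01 * V (gam p00 p10 π) true + (1 - θ01) * V (gam p00 p10 π) false)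

/-- Action value for an unavailable arm (subsidy `w`). -/
def Lact0u (p00 p10 β w θ00 : ℝ) (V : ℝ → Bool → ℝ) (π : ℝ) : ℝ :=
  w + β * (θ00 * V (gam p00 p10 π) true + (1 - θ00) * V (gam p00 p10 π) false)

/-- Bellman operator of the constrained restless single-armed bandit with
stochastic availability; availability `y` is encoded by `Bool`. -/
def TwOp (p00 p10 ρ0 ρ1 β w θ11 θ01 θ00 : ℝ) (V : ℝ → Bool → ℝ) : ℝ → Bool → ℝ :=
  fun π y =>
    if y then max (Lact1 p00 p10 ρ0 ρ1 β θ11 V π) (Lact0a p00 p10 β w θ01 V π)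
    else Lact0u p00 p10 β w θ00 V π

/-- Bounded on the belief space `[0,1] × {0,1}`. -/
def BddOnIcc (V : ℝ → Bool → ℝ) : Prop :=
  ∃ C : ℝ, ∀ π ∈ Icc (0:ℝ) 1, ∀ y : Bool, |V π y| ≤ C

/-- Fixed point of an operator on the belief space `[0,1] × {0,1}`. -/
def FixedOnIcc (T : (ℝ → Bool → ℝ) → ℝ → Bool → ℝ) (V : ℝ → Bool → ℝ) : Prop :=
  ∀ π ∈ Icc (0:ℝ) 1, ∀ y : Bool, T V π y = V π y

section Comparison

variable {α ι : Type*}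

theorem le_of_isFixed_of_map_le_self {S : Set α} {T : (α → ι → ℝ) → α → ι → ℝ} {β : ℝ}
    (hβ : β < 1)
    (hmono : ∀ X Y : α → ι → ℝ, (∀ x ∈ S, ∀ i, X x i ≤ Y x i) →
      ∀ x ∈ S, ∀ i, T X x i ≤ T Y x i)
    (hdisc : ∀ (X : α → ι → ℝ) (c : ℝ), 0 ≤ c →
      ∀ x ∈ S, ∀ i, T (fun x i => X x i + c) x i ≤ T X x i + β * c)
    {W U : α → ι → ℝ} (hWU : ∃ C, ∀ x ∈ S, ∀ i, W x i ≤ U x i + C)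
    (hW : ∀ x ∈ S, ∀ i, T W x i = W x i) (hU : ∀ x ∈ S, ∀ i, T U x i ≤ U x i) :
    ∀ x ∈ S, ∀ i, W x i ≤ U x i := by
  intro x₀ hx₀ i₀
  obtain ⟨C, hC⟩ := hWU
  set D := {d | ∃ x ∈ S, ∃ i, d = W x i - U x i}
  have hD : BddAbove D := ⟨C, by rintro _ ⟨x, hx, i, rfl⟩; linarith [hC x hx i]⟩
  set c := max (sSup D) 0
  have hWc : ∀ x ∈ S, ∀ i, W x i ≤ U x i + c := fun x hx i => by
    linarith [le_csSup hD ⟨x, hx, i, rfl⟩, le_max_left (sSup D) 0]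
  -- one application of `T` improves the bound `c` on `W - U` to `β * c`
  have hstep : ∀ x ∈ S, ∀ i, W x i - U x i ≤ β * c := fun x hx i => by
    have hT := hmono W _ hWc x hx i
    linarith [hW x hx i, hdisc U c (le_max_right _ _) x hx i, hU x hx i]
  have hsup : sSup D ≤ β * c :=
    csSup_le ⟨_, x₀, hx₀, i₀, rfl⟩ (by rintro _ ⟨x, hx, i, rfl⟩; exact hstep x hx i)
  have hsup_nonpos : sSup D ≤ 0 := by
    by_contra! hpos
    rw [show c = sSup D from max_eq_left hpos.le] at hsup
    nlinarith
  linarith [le_csSup hD ⟨x₀, hx₀, i₀, rfl⟩]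

end Comparison

lemma BddOnIcc.exists_le_add {X Y : ℝ → Bool → ℝ} (hX : BddOnIcc X) (hY : BddOnIcc Y) :
    ∃ C, ∀ π ∈ Icc (0:ℝ) 1, ∀ y, X π y ≤ Y π y + C := by
  obtain ⟨CX, hCX⟩ := hX
  obtain ⟨CY, hCY⟩ := hY
  exact ⟨CX + CY, fun π hπ y => by
    linarith [(abs_le.1 (hCX π hπ y)).2, (abs_le.1 (hCY π hπ y)).1]⟩

lemma BddOnIcc.linear_comb {X Y : ℝ → Bool → ℝ} (hX : BddOnIcc X) (hY : BddOnIcc Y) (l m : ℝ) :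
    BddOnIcc (fun π y => l * X π y + m * Y π y) := by
  obtain ⟨CX, hCX⟩ := hX
  obtain ⟨CY, hCY⟩ := hY
  refine ⟨|l| * CX + |m| * CY, fun π hπ y => ?_⟩
  calc |l * X π y + m * Y π y| ≤ |l| * |X π y| + |m| * |Y π y| := by
        simpa only [abs_mul] using abs_add_le (l * X π y) (m * Y π y)
    _ ≤ |l| * CX + |m| * CY := by
        gcongr
        exacts [hCX π hπ y, hCY π hπ y]

section BeliefSpace

variable {p00 p10 ρ0 ρ1 π : ℝ}

lemma rhoB_mem_Icc (hρ0 : ρ0 ∈ Icc (0:ℝ) 1) (hρ1 : ρ1 ∈ Icc (0:ℝ) 1)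
    (hπ : π ∈ Icc (0:ℝ) 1) : rhoB ρ0 ρ1 π ∈ Icc (0:ℝ) 1 :=
  convex_Icc 0 1 hρ0 hρ1 hπ.1 (sub_nonneg.2 hπ.2) (add_sub_cancel π 1)

lemma gam_mem_Icc (hp00 : p00 ∈ Icc (0:ℝ) 1) (hp10 : p10 ∈ Icc (0:ℝ) 1)
    (hπ : π ∈ Icc (0:ℝ) 1) : gam p00 p10 π ∈ Icc (0:ℝ) 1 :=
  convex_Icc 0 1 hp00 hp10 hπ.1 (sub_nonneg.2 hπ.2) (add_sub_cancel π 1)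

/-- The common shape of the Bayesian updates `Gam1` and `Gam0` (with weights `a = ρ0, b = ρ1`
and `a = 1 - ρ0, b = 1 - ρ1`); a vanishing denominator gives the junk value `0`, still a belief. -/
lemma bayes_update_mem_Icc {a b : ℝ} (ha : 0 ≤ a) (hb : 0 ≤ b)
    (hp00 : p00 ∈ Icc (0:ℝ) 1) (hp10 : p10 ∈ Icc (0:ℝ) 1) (hπ : π ∈ Icc (0:ℝ) 1) :
    (π * a * p00 + (1 - π) * b * p10) / (π * a + (1 - π) * b) ∈ Icc (0:ℝ) 1 := by
  have hA : 0 ≤ π * a := mul_nonneg hπ.1 ha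
  have hB : 0 ≤ (1 - π) * b := mul_nonneg (sub_nonneg.2 hπ.2) hb
  have hnum : 0 ≤ π * a * p00 + (1 - π) * b * p10 :=
    add_nonneg (mul_nonneg hA hp00.1) (mul_nonneg hB hp10.1)
  have hle : π * a * p00 + (1 - π) * b * p10 ≤ π * a + (1 - π) * b :=
    add_le_add (mul_le_of_le_one_right hA hp00.2) (mul_le_of_le_one_right hB hp10.2)
  exact ⟨div_nonneg hnum (hnum.trans hle), div_le_one_of_le₀ hle (hnum.trans hle)⟩

lemma Gam1_mem_Icc (hp00 : p00 ∈ Icc (0:ℝ) 1) (hp10 : p10 ∈ Icc (0:ℝ) 1)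
    (hρ0 : ρ0 ∈ Icc (0:ℝ) 1) (hρ1 : ρ1 ∈ Icc (0:ℝ) 1) (hπ : π ∈ Icc (0:ℝ) 1) :
    Gam1 p00 p10 ρ0 ρ1 π ∈ Icc (0:ℝ) 1 :=
  bayes_update_mem_Icc hρ0.1 hρ1.1 hp00 hp10 hπ

lemma Gam0_mem_Icc (hp00 : p00 ∈ Icc (0:ℝ) 1) (hp10 : p10 ∈ Icc (0:ℝ) 1)
    (hρ0 : ρ0 ∈ Icc (0:ℝ) 1) (hρ1 : ρ1 ∈ Icc (0:ℝ) 1) (hπ : π ∈ Icc (0:ℝ) 1) :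
    Gam0 p00 p10 ρ0 ρ1 π ∈ Icc (0:ℝ) 1 :=
  bayes_update_mem_Icc (sub_nonneg.2 hρ0.2) (sub_nonneg.2 hρ1.2) hp00 hp10 hπ

end BeliefSpace

section ActionValues

variable {p00 p10 ρ0 ρ1 β θ θ11 θ01 θ00 w π : ℝ}

lemma Lact0u_eq_Lact0a : Lact0u = Lact0a := rfl

lemma Lact1_mono (hp00 : p00 ∈ Icc (0:ℝ) 1) (hp10 : p10 ∈ Icc (0:ℝ) 1)
    (hρ0 : ρ0 ∈ Icc (0:ℝ) 1) (hρ1 : ρ1 ∈ Icc (0:ℝ) 1) (hβ : 0 ≤ β) (hθ11 : θ11 ∈ Icc (0:ℝ) 1)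
    {X Y : ℝ → Bool → ℝ} (hXY : ∀ π ∈ Icc (0:ℝ) 1, ∀ y, X π y ≤ Y π y)
    (hπ : π ∈ Icc (0:ℝ) 1) :
    Lact1 p00 p10 ρ0 ρ1 β θ11 X π ≤ Lact1 p00 p10 ρ0 ρ1 β θ11 Y π := by
  have hρ := rhoB_mem_Icc hρ0 hρ1 hπ
  have h1 := hXY _ (Gam1_mem_Icc hp00 hp10 hρ0 hρ1 hπ)
  have h0 := hXY _ (Gam0_mem_Icc hp00 hp10 hρ0 hρ1 hπ)
  have hθ : 0 ≤ θ11 := hθ11.1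
  have hθ' : 0 ≤ 1 - θ11 := sub_nonneg.2 hθ11.2
  have hβρ : 0 ≤ β * rhoB ρ0 ρ1 π := mul_nonneg hβ hρ.1
  have hβρ' : 0 ≤ β * (1 - rhoB ρ0 ρ1 π) := mul_nonneg hβ (sub_nonneg.2 hρ.2)
  unfold Lact1
  gcongr
  exacts [h1 true, h1 false, h0 true, h0 false]

lemma Lact0a_mono (hp00 : p00 ∈ Icc (0:ℝ) 1) (hp10 : p10 ∈ Icc (0:ℝ) 1) (hβ : 0 ≤ β)
    (hθ : θ ∈ Icc (0:ℝ) 1) {X Y : ℝ → Bool → ℝ} (hXY : ∀ π ∈ Icc (0:ℝ) 1, ∀ y, X π y ≤ Y π y)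
    (hπ : π ∈ Icc (0:ℝ) 1) :
    Lact0a p00 p10 β w θ X π ≤ Lact0a p00 p10 β w θ Y π := by
  have h := hXY _ (gam_mem_Icc hp00 hp10 hπ)
  have hθ₀ : 0 ≤ θ := hθ.1
  have hθ' : 0 ≤ 1 - θ := sub_nonneg.2 hθ.2
  unfold Lact0a
  gcongr
  exacts [h true, h false]

lemma Lact1_add_const (X : ℝ → Bool → ℝ) (c : ℝ) :
    Lact1 p00 p10 ρ0 ρ1 β θ11 (fun π y => X π y + c) π
      = Lact1 p00 p10 ρ0 ρ1 β θ11 X π + β * c := by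
  unfold Lact1; ring

lemma Lact0a_add_const (X : ℝ → Bool → ℝ) (c : ℝ) :
    Lact0a p00 p10 β w θ (fun π y => X π y + c) π = Lact0a p00 p10 β w θ X π + β * c := by
  unfold Lact0a; ring

lemma Lact1_affine_comb (X Y : ℝ → Bool → ℝ) {l m : ℝ} (hlm : l + m = 1) :
    Lact1 p00 p10 ρ0 ρ1 β θ11 (fun π y => l * X π y + m * Y π y) π
      = l * Lact1 p00 p10 ρ0 ρ1 β θ11 X π + m * Lact1 p00 p10 ρ0 ρ1 β θ11 Y π := by
  obtain rfl : m = 1 - l := by linarith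
  unfold Lact1; ring

lemma Lact0a_linear_comb (X Y : ℝ → Bool → ℝ) (a b l m : ℝ) :
    Lact0a p00 p10 β (l * a + m * b) θ (fun π y => l * X π y + m * Y π y) π
      = l * Lact0a p00 p10 β a θ X π + m * Lact0a p00 p10 β b θ Y π := by
  unfold Lact0a; ring

end ActionValues

section BellmanOperator

variable {p00 p10 ρ0 ρ1 β θ11 θ01 θ00 w : ℝ}

lemma TwOp_mono (hp00 : p00 ∈ Icc (0:ℝ) 1) (hp10 : p10 ∈ Icc (0:ℝ) 1)
    (hρ0 : ρ0 ∈ Icc (0:ℝ) 1) (hρ1 : ρ1 ∈ Icc (0:ℝ) 1) (hβ : 0 ≤ β)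
    (hθ11 : θ11 ∈ Icc (0:ℝ) 1) (hθ01 : θ01 ∈ Icc (0:ℝ) 1) (hθ00 : θ00 ∈ Icc (0:ℝ) 1)
    {X Y : ℝ → Bool → ℝ} (hXY : ∀ π ∈ Icc (0:ℝ) 1, ∀ y, X π y ≤ Y π y) :
    ∀ π ∈ Icc (0:ℝ) 1, ∀ y,
      TwOp p00 p10 ρ0 ρ1 β w θ11 θ01 θ00 X π y ≤ TwOp p00 p10 ρ0 ρ1 β w θ11 θ01 θ00 Y π y := by
  rintro π hπ (_ | _)
  · exact Lact0a_mono hp00 hp10 hβ hθ00 hXY hπ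
  · exact max_le_max (Lact1_mono hp00 hp10 hρ0 hρ1 hβ hθ11 hXY hπ)
      (Lact0a_mono hp00 hp10 hβ hθ01 hXY hπ)

lemma TwOp_add_const (X : ℝ → Bool → ℝ) (c π : ℝ) (y : Bool) :
    TwOp p00 p10 ρ0 ρ1 β w θ11 θ01 θ00 (fun π y => X π y + c) π y
      = TwOp p00 p10 ρ0 ρ1 β w θ11 θ01 θ00 X π y + β * c := by
  cases y <;> simp only [TwOp, Bool.false_eq_true, if_false, if_true, Lact0u_eq_Lact0a,
    Lact1_add_const, Lact0a_add_const, max_add_add_right]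

lemma TwOp_convex_comb_le (X Y : ℝ → Bool → ℝ) {a b l m : ℝ} (hl : 0 ≤ l) (hm : 0 ≤ m)
    (hlm : l + m = 1) (π : ℝ) (y : Bool) :
    TwOp p00 p10 ρ0 ρ1 β (l * a + m * b) θ11 θ01 θ00 (fun π y => l * X π y + m * Y π y) π y
      ≤ l * TwOp p00 p10 ρ0 ρ1 β a θ11 θ01 θ00 X π y
        + m * TwOp p00 p10 ρ0 ρ1 β b θ11 θ01 θ00 Y π y := by
  cases y
  · exact (Lact0a_linear_comb X Y a b l m).le
  · simp only [TwOp, if_true, Lact1_affine_comb X Y hlm, Lact0a_linear_comb,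
      mul_max_of_nonneg _ _ hl, mul_max_of_nonneg _ _ hm]
    exact max_add_add_le_max_add_max

end BellmanOperator

section Convexity

variable {p00 p10 ρ0 ρ1 β θ θ11 θ01 θ00 : ℝ}

theorem convexOn_fixedPoint (hp00 : p00 ∈ Icc (0:ℝ) 1) (hp10 : p10 ∈ Icc (0:ℝ) 1)
    (hρ0 : ρ0 ∈ Icc (0:ℝ) 1) (hρ1 : ρ1 ∈ Icc (0:ℝ) 1) (hβ0 : 0 ≤ β) (hβ1 : β < 1)
    (hθ11 : θ11 ∈ Icc (0:ℝ) 1) (hθ01 : θ01 ∈ Icc (0:ℝ) 1) (hθ00 : θ00 ∈ Icc (0:ℝ) 1)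
    {V : ℝ → ℝ → Bool → ℝ} (hVb : ∀ w, BddOnIcc (V w))
    (hVfix : ∀ w, FixedOnIcc (TwOp p00 p10 ρ0 ρ1 β w θ11 θ01 θ00) (V w)) :
    ∀ π ∈ Icc (0:ℝ) 1, ∀ y, ConvexOn ℝ univ (fun w => V w π y) := by
  intro π hπ y
  refine ⟨convex_univ, fun a _ b _ l m hl hm hlm => ?_⟩
  refine le_of_isFixed_of_map_le_self hβ1
    (fun X Y => TwOp_mono hp00 hp10 hρ0 hρ1 hβ0 hθ11 hθ01 hθ00)
    (fun X c _ π _ y => (TwOp_add_const X c π y).le)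
    ((hVb _).exists_le_add ((hVb a).linear_comb (hVb b) l m)) (hVfix _)
    (fun π hπ y => ?_) π hπ y
  rw [← hVfix a π hπ y, ← hVfix b π hπ y]
  exact TwOp_convex_comb_le (V a) (V b) hl hm hlm π y

lemma convexOn_Lact1 (hp00 : p00 ∈ Icc (0:ℝ) 1) (hp10 : p10 ∈ Icc (0:ℝ) 1)
    (hρ0 : ρ0 ∈ Icc (0:ℝ) 1) (hρ1 : ρ1 ∈ Icc (0:ℝ) 1) (hβ : 0 ≤ β) (hθ11 : θ11 ∈ Icc (0:ℝ) 1)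
    {V : ℝ → ℝ → Bool → ℝ} (hV : ∀ π ∈ Icc (0:ℝ) 1, ∀ y, ConvexOn ℝ univ (fun w => V w π y))
    {π : ℝ} (hπ : π ∈ Icc (0:ℝ) 1) :
    ConvexOn ℝ univ (fun w => Lact1 p00 p10 ρ0 ρ1 β θ11 (V w) π) :=
  ⟨convex_univ, fun a _ b _ _ _ hl hm hlm =>
    (Lact1_mono hp00 hp10 hρ0 hρ1 hβ hθ11
      (fun π hπ y => (hV π hπ y).2 (mem_univ a) (mem_univ b) hl hm hlm) hπ).trans_eq
      (Lact1_affine_comb (V a) (V b) hlm)⟩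

lemma convexOn_Lact0a (hp00 : p00 ∈ Icc (0:ℝ) 1) (hp10 : p10 ∈ Icc (0:ℝ) 1) (hβ : 0 ≤ β)
    (hθ : θ ∈ Icc (0:ℝ) 1)
    {V : ℝ → ℝ → Bool → ℝ} (hV : ∀ π ∈ Icc (0:ℝ) 1, ∀ y, ConvexOn ℝ univ (fun w => V w π y))
    {π : ℝ} (hπ : π ∈ Icc (0:ℝ) 1) :
    ConvexOn ℝ univ (fun w => Lact0a p00 p10 β w θ (V w) π) :=
  ⟨convex_univ, fun a _ b _ l m hl hm hlm =>
    (Lact0a_mono hp00 hp10 hβ hθ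
      (fun π hπ y => (hV π hπ y).2 (mem_univ a) (mem_univ b) hl hm hlm) hπ).trans_eq
      (Lact0a_linear_comb (V a) (V b) a b l m)⟩

end Convexity

/-- **Convexity in subsidy.** For each fixed belief
`π ∈ [0,1]` and each availability/feasible action, the value function and
action-value functions are convex in the subsidy `w` on `ℝ`; here `V w` is
the unique bounded fixed point of `T_w`. -/
theorem stmt6 (p00 p10 ρ0 ρ1 β θ11 θ01 θ00 : ℝ)
    (hp00 : p00 ∈ Icc (0:ℝ) 1) (hp10 : p10 ∈ Icc (0:ℝ) 1)
    (hρ0 : 0 < ρ0) (hρ01 : ρ0 < ρ1) (hρ1 : ρ1 < 1)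
    (hβ : β ∈ Ioo (0:ℝ) 1)
    (hθ11 : θ11 ∈ Icc (0:ℝ) 1) (hθ01 : θ01 ∈ Icc (0:ℝ) 1) (hθ00 : θ00 ∈ Icc (0:ℝ) 1)
    (V : ℝ → ℝ → Bool → ℝ)
    (hVb : ∀ w : ℝ, BddOnIcc (V w))
    (hVfix : ∀ w : ℝ, FixedOnIcc (TwOp p00 p10 ρ0 ρ1 β w θ11 θ01 θ00) (V w)) :
    ∀ π ∈ Icc (0:ℝ) 1,
      (∀ y : Bool, ConvexOn ℝ univ (fun w : ℝ => V w π y))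
      ∧ ConvexOn ℝ univ (fun w : ℝ => Lact1 p00 p10 ρ0 ρ1 β θ11 (V w) π)
      ∧ ConvexOn ℝ univ (fun w : ℝ => Lact0a p00 p10 β w θ01 (V w) π)
      ∧ ConvexOn ℝ univ (fun w : ℝ => Lact0u p00 p10 β w θ00 (V w) π) := by
  have hρ0' : ρ0 ∈ Icc (0:ℝ) 1 := ⟨hρ0.le, by linarith⟩
  have hρ1' : ρ1 ∈ Icc (0:ℝ) 1 := ⟨by linarith, hρ1.le⟩
  have hV := convexOn_fixedPoint hp00 hp10 hρ0' hρ1' hβ.1.le hβ.2 hθ11 hθ01 hθ00 hVb hVfix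
  intro π hπ
  exact ⟨hV π hπ, convexOn_Lact1 hp00 hp10 hρ0' hρ1' hβ.1.le hθ11 hV hπ,
    convexOn_Lact0a hp00 hp10 hβ.1.le hθ01 hV hπ, convexOn_Lact0a hp00 hp10 hβ.1.le hθ00 hV hπ⟩
end
end

section
/- (Lipschitz preservation by the Bellman operator — induction step.) Assume either 0 < p00 − p10 < 1/2 or 0 < p10 − p00 < 1, and set κ = 1/(1 − β|p00 − p10|). If V : [0,1]×{0,1} → ℝ is bounded and π ↦ V(π, y) is Lipschitz with constant κ(ρ1 − ρ0) for each y ∈ {0,1}, then π ↦ (T_wV)(π, 1) and π ↦ (T_wV)(π, 0) are also Lipschitz on [0,1] with constant κ(ρ1 − ρ0). -/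
open Set

noncomputable section

/-!
If `A` is `L`-Lipschitz on `[0,1]`, the expected continuation value after a play,
`π ↦ ρ(π) A(Γ1 π) + (1 - ρ(π)) A(Γ0 π)`, is `L |p00 - p10|`-Lipschitz. Its increment splits as

  `ρ(π) (A(Γ1 π) - A(Γ1 π')) + (1 - ρ(π)) (A(Γ0 π) - A(Γ0 π'))`
  `+ (ρ(π) - ρ(π')) (A(Γ1 π') - A(Γ0 π'))`,

and the explicit differences of the belief updates bound the three terms by
`L |p00 - p10| |π - π'|` times the weights `ρ0 ρ1 / ρ(π')`, `(1 - ρ0)(1 - ρ1) / (1 - ρ(π'))` and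
`π'(1 - π')(ρ1 - ρ0)² / (ρ(π')(1 - ρ(π')))`, which sum to one. Since `γ` is
`|p00 - p10|`-Lipschitz, every action value, hence also their maximum, is
`((ρ1 - ρ0) + β |p00 - p10| L)`-Lipschitz, and `L = κ (ρ1 - ρ0)` is exactly the fixed point of
`L ↦ (ρ1 - ρ0) + β |p00 - p10| L`.
-/

-- A real Lipschitz constant, to avoid the `ℝ≥0` coercions of `LipschitzOnWith`.
def RealLipschitzOn (K : ℝ) (s : Set ℝ) (f : ℝ → ℝ) : Prop :=
  ∀ x ∈ s, ∀ y ∈ s, |f x - f y| ≤ K * |x - y|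

namespace RealLipschitzOn

variable {K K' : ℝ} {s t : Set ℝ} {f g : ℝ → ℝ}

theorem mono (hf : RealLipschitzOn K s f) (h : K ≤ K') : RealLipschitzOn K' s f :=
  fun x hx y hy => (hf x hx y hy).trans (mul_le_mul_of_nonneg_right h (abs_nonneg _))

theorem add (hf : RealLipschitzOn K s f) (hg : RealLipschitzOn K' s g) :
    RealLipschitzOn (K + K') s (fun x => f x + g x) := fun x hx y hy =>
  calc |f x + g x - (f y + g y)| = |(f x - f y) + (g x - g y)| := by ring_nf
    _ ≤ |f x - f y| + |g x - g y| := abs_add_le _ _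
    _ ≤ K * |x - y| + K' * |x - y| := add_le_add (hf x hx y hy) (hg x hx y hy)
    _ = (K + K') * |x - y| := by ring

theorem const_add (hf : RealLipschitzOn K s f) (c : ℝ) :
    RealLipschitzOn K s (fun x => c + f x) := fun x hx y hy => by
  simpa only [add_sub_add_left_eq_sub] using hf x hx y hy

theorem const_mul (hf : RealLipschitzOn K s f) {c : ℝ} (hc : 0 ≤ c) :
    RealLipschitzOn (c * K) s (fun x => c * f x) := fun x hx y hy => by
  rw [← mul_sub, abs_mul, abs_of_nonneg hc, mul_assoc]
  exact mul_le_mul_of_nonneg_left (hf x hx y hy) hc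

theorem convex_comb (hf : RealLipschitzOn K s f) (hg : RealLipschitzOn K s g) {θ : ℝ}
    (hθ : θ ∈ Icc (0 : ℝ) 1) : RealLipschitzOn K s (fun x => θ * f x + (1 - θ) * g x) := by
  have h := (hf.const_mul hθ.1).add (hg.const_mul (sub_nonneg.2 hθ.2))
  rwa [← add_mul, add_sub_cancel, one_mul] at h

theorem comp (hf : RealLipschitzOn K t f) (hg : RealLipschitzOn K' s g) (hst : MapsTo g s t)
    (hK : 0 ≤ K) : RealLipschitzOn (K * K') s (fun x => f (g x)) := fun x hx y hy =>
  calc |f (g x) - f (g y)| ≤ K * |g x - g y| := hf _ (hst hx) _ (hst hy)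
    _ ≤ K * (K' * |x - y|) := mul_le_mul_of_nonneg_left (hg x hx y hy) hK
    _ = K * K' * |x - y| := by ring

theorem max (hf : RealLipschitzOn K s f) (hg : RealLipschitzOn K s g) :
    RealLipschitzOn K s (fun x => max (f x) (g x)) := fun x hx y hy =>
  (abs_max_sub_max_le_max _ _ _ _).trans (max_le (hf x hx y hy) (hg x hx y hy))

end RealLipschitzOn

section BeliefUpdates

variable {p00 p10 ρ0 ρ1 π π' : ℝ}

theorem one_sub_rhoB (ρ0 ρ1 π : ℝ) : 1 - rhoB ρ0 ρ1 π = rhoB (1 - ρ0) (1 - ρ1) π := by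
  unfold rhoB; ring

theorem Gam0_eq_Gam1 : Gam0 p00 p10 ρ0 ρ1 = Gam1 p00 p10 (1 - ρ0) (1 - ρ1) := rfl

theorem rhoB_pos (hρ0 : 0 < ρ0) (hρ1 : 0 < ρ1) (hπ : π ∈ Icc (0 : ℝ) 1) :
    0 < rhoB ρ0 ρ1 π := by
  have hm := lt_min hρ0 hρ1
  unfold rhoB
  nlinarith [mul_le_mul_of_nonneg_left (min_le_left ρ0 ρ1) hπ.1,
    mul_le_mul_of_nonneg_left (min_le_right ρ0 ρ1) (sub_nonneg.2 hπ.2)]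

theorem realLipschitzOn_rhoB (h : ρ0 ≤ ρ1) (s : Set ℝ) :
    RealLipschitzOn (ρ1 - ρ0) s (rhoB ρ0 ρ1) := fun x _ y _ => by
  rw [show rhoB ρ0 ρ1 x - rhoB ρ0 ρ1 y = (ρ0 - ρ1) * (x - y) by unfold rhoB; ring,
    abs_mul, abs_sub_comm, abs_of_nonneg (sub_nonneg.2 h)]

theorem realLipschitzOn_gam (s : Set ℝ) : RealLipschitzOn |p00 - p10| s (gam p00 p10) :=
  fun x _ y _ => by
  rw [show gam p00 p10 x - gam p00 p10 y = (p00 - p10) * (x - y) by unfold gam; ring, abs_mul]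

theorem mapsTo_gam (hp00 : p00 ∈ Icc (0 : ℝ) 1) (hp10 : p10 ∈ Icc (0 : ℝ) 1) :
    MapsTo (gam p00 p10) (Icc 0 1) (Icc 0 1) := fun π hπ => by
  obtain ⟨hπ0, hπ1⟩ := hπ
  unfold gam
  constructor <;> nlinarith [hp00.1, hp00.2, hp10.1, hp10.2]

theorem mapsTo_Gam1 (hp00 : p00 ∈ Icc (0 : ℝ) 1) (hp10 : p10 ∈ Icc (0 : ℝ) 1)
    (hρ0 : 0 < ρ0) (hρ1 : 0 < ρ1) : MapsTo (Gam1 p00 p10 ρ0 ρ1) (Icc 0 1) (Icc 0 1) :=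
  fun π hπ => by
  have hr := rhoB_pos hρ0 hρ1 hπ
  have hw0 : 0 ≤ π * ρ0 := mul_nonneg hπ.1 hρ0.le
  have hw1 : 0 ≤ (1 - π) * ρ1 := mul_nonneg (sub_nonneg.2 hπ.2) hρ1.le
  unfold rhoB at hr
  unfold Gam1
  constructor
  · exact div_nonneg (add_nonneg (mul_nonneg hw0 hp00.1) (mul_nonneg hw1 hp10.1)) hr.le
  · rw [div_le_one hr]
    exact add_le_add (mul_le_of_le_one_right hw0 hp00.2) (mul_le_of_le_one_right hw1 hp10.2)

theorem Gam1_sub_Gam1 (h : rhoB ρ0 ρ1 π ≠ 0) (h' : rhoB ρ0 ρ1 π' ≠ 0) :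
    Gam1 p00 p10 ρ0 ρ1 π - Gam1 p00 p10 ρ0 ρ1 π' =
      ρ0 * ρ1 * (p00 - p10) * (π - π') / (rhoB ρ0 ρ1 π * rhoB ρ0 ρ1 π') := by
  unfold rhoB at h h'
  unfold Gam1 rhoB
  rw [div_sub_div _ _ h h']
  congr 1
  ring

theorem Gam1_sub_Gam0 (h : rhoB ρ0 ρ1 π ≠ 0) (h' : 1 - rhoB ρ0 ρ1 π ≠ 0) :
    Gam1 p00 p10 ρ0 ρ1 π - Gam0 p00 p10 ρ0 ρ1 π =
      π * (1 - π) * (ρ0 - ρ1) * (p00 - p10) / (rhoB ρ0 ρ1 π * (1 - rhoB ρ0 ρ1 π)) := by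
  have h0 : π * (1 - ρ0) + (1 - π) * (1 - ρ1) ≠ 0 := by
    rwa [one_sub_rhoB] at h'
  unfold Gam0 Gam1
  rw [div_sub_div _ _ (show π * ρ0 + (1 - π) * ρ1 ≠ 0 from h) h0, one_sub_rhoB]
  unfold rhoB
  congr 1
  ring

theorem bayes_weights_sum_eq_one (h : rhoB ρ0 ρ1 π ≠ 0) (h' : 1 - rhoB ρ0 ρ1 π ≠ 0) :
    ρ0 * ρ1 / rhoB ρ0 ρ1 π + (1 - ρ0) * (1 - ρ1) / (1 - rhoB ρ0 ρ1 π)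
      + π * (1 - π) * (ρ1 - ρ0) ^ 2 / (rhoB ρ0 ρ1 π * (1 - rhoB ρ0 ρ1 π)) = 1 := by
  field_simp
  unfold rhoB
  ring

end BeliefUpdates

section BayesianAverage

variable {p00 p10 ρ0 ρ1 L π π' : ℝ} {A : ℝ → ℝ}

theorem rhoB_mul_abs_sub_comp_Gam1_le (hp00 : p00 ∈ Icc (0 : ℝ) 1)
    (hp10 : p10 ∈ Icc (0 : ℝ) 1) (hρ0 : 0 < ρ0) (hρ1 : 0 < ρ1)
    (hA : RealLipschitzOn L (Icc 0 1) A) (hπ : π ∈ Icc (0 : ℝ) 1) (hπ' : π' ∈ Icc (0 : ℝ) 1) :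
    rhoB ρ0 ρ1 π * |A (Gam1 p00 p10 ρ0 ρ1 π) - A (Gam1 p00 p10 ρ0 ρ1 π')|
      ≤ L * |p00 - p10| * |π - π'| * (ρ0 * ρ1 / rhoB ρ0 ρ1 π') := by
  have hr := rhoB_pos hρ0 hρ1 hπ
  have hr' := rhoB_pos hρ0 hρ1 hπ'
  have hmaps := mapsTo_Gam1 hp00 hp10 hρ0 hρ1
  calc _ ≤ rhoB ρ0 ρ1 π * (L * |Gam1 p00 p10 ρ0 ρ1 π - Gam1 p00 p10 ρ0 ρ1 π'|) :=
        mul_le_mul_of_nonneg_left (hA _ (hmaps hπ) _ (hmaps hπ')) hr.le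
    _ = _ := by
      rw [Gam1_sub_Gam1 hr.ne' hr'.ne', abs_div, abs_mul, abs_mul, abs_of_pos (mul_pos hρ0 hρ1),
        abs_of_pos (mul_pos hr hr')]
      field_simp

theorem abs_sub_comp_Gam1_comp_Gam0_le (hp00 : p00 ∈ Icc (0 : ℝ) 1)
    (hp10 : p10 ∈ Icc (0 : ℝ) 1) (hρ0 : 0 < ρ0) (hρ01 : ρ0 < ρ1) (hρ1 : ρ1 < 1)
    (hA : RealLipschitzOn L (Icc 0 1) A) (hπ : π ∈ Icc (0 : ℝ) 1) :
    |A (Gam1 p00 p10 ρ0 ρ1 π) - A (Gam0 p00 p10 ρ0 ρ1 π)|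
      ≤ L * |p00 - p10| * (π * (1 - π) * (ρ1 - ρ0) / (rhoB ρ0 ρ1 π * (1 - rhoB ρ0 ρ1 π))) := by
  have hr := rhoB_pos hρ0 (hρ0.trans hρ01) hπ
  have hr1 : 0 < 1 - rhoB ρ0 ρ1 π := by
    rw [one_sub_rhoB]; exact rhoB_pos (by linarith) (by linarith) hπ
  have hΓ1 := mapsTo_Gam1 hp00 hp10 hρ0 (hρ0.trans hρ01) hπ
  have hΓ0 := mapsTo_Gam1 hp00 hp10 (by linarith : 0 < 1 - ρ0) (by linarith : 0 < 1 - ρ1) hπ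
  rw [← Gam0_eq_Gam1] at hΓ0
  refine (hA _ hΓ1 _ hΓ0).trans (le_of_eq ?_)
  rw [Gam1_sub_Gam0 hr.ne' hr1.ne', abs_div, abs_mul, abs_mul, abs_mul, abs_mul,
    abs_of_nonneg hπ.1, abs_of_nonneg (sub_nonneg.2 hπ.2), abs_sub_comm ρ0,
    abs_of_pos (sub_pos.2 hρ01), abs_of_pos hr, abs_of_pos hr1]
  ring

theorem realLipschitzOn_bayesAverage (hp00 : p00 ∈ Icc (0 : ℝ) 1)
    (hp10 : p10 ∈ Icc (0 : ℝ) 1) (hρ0 : 0 < ρ0) (hρ01 : ρ0 < ρ1) (hρ1 : ρ1 < 1)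
    (hA : RealLipschitzOn L (Icc 0 1) A) :
    RealLipschitzOn (L * |p00 - p10|) (Icc 0 1) (fun π =>
      rhoB ρ0 ρ1 π * A (Gam1 p00 p10 ρ0 ρ1 π)
        + (1 - rhoB ρ0 ρ1 π) * A (Gam0 p00 p10 ρ0 ρ1 π)) := by
  intro π hπ π' hπ'
  set r := rhoB ρ0 ρ1
  set Γ1 := Gam1 p00 p10 ρ0 ρ1
  set Γ0 := Gam0 p00 p10 ρ0 ρ1
  set c := L * |p00 - p10| * |π - π'|
  have hr : 0 < r π := rhoB_pos hρ0 (hρ0.trans hρ01) hπ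
  have hr' : 0 < r π' := rhoB_pos hρ0 (hρ0.trans hρ01) hπ'
  have hr1 : 0 < 1 - r π := by
    rw [one_sub_rhoB]; exact rhoB_pos (by linarith) (by linarith) hπ
  have hr1' : 0 < 1 - r π' := by
    rw [one_sub_rhoB]; exact rhoB_pos (by linarith) (by linarith) hπ'
  have h1 : r π * |A (Γ1 π) - A (Γ1 π')| ≤ c * (ρ0 * ρ1 / r π') :=
    rhoB_mul_abs_sub_comp_Gam1_le hp00 hp10 hρ0 (hρ0.trans hρ01) hA hπ hπ'
  have h0 : (1 - r π) * |A (Γ0 π) - A (Γ0 π')| ≤ c * ((1 - ρ0) * (1 - ρ1) / (1 - r π')) := by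
    simpa only [r, Γ0, one_sub_rhoB, Gam0_eq_Gam1] using
      rhoB_mul_abs_sub_comp_Gam1_le hp00 hp10 (by linarith : 0 < 1 - ρ0)
        (by linarith : 0 < 1 - ρ1) hA hπ hπ'
  have hcross : |r π - r π'| * |A (Γ1 π') - A (Γ0 π')|
      ≤ c * (π' * (1 - π') * (ρ1 - ρ0) ^ 2 / (r π' * (1 - r π'))) :=
    calc _ ≤ ((ρ1 - ρ0) * |π - π'|) * (L * |p00 - p10| *
            (π' * (1 - π') * (ρ1 - ρ0) / (r π' * (1 - r π')))) :=
          mul_le_mul (realLipschitzOn_rhoB hρ01.le _ π hπ π' hπ')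
            (abs_sub_comp_Gam1_comp_Gam0_le hp00 hp10 hρ0 hρ01 hρ1 hA hπ')
            (abs_nonneg _) (mul_nonneg (sub_nonneg.2 hρ01.le) (abs_nonneg _))
      _ = _ := by ring
  calc |r π * A (Γ1 π) + (1 - r π) * A (Γ0 π) - (r π' * A (Γ1 π') + (1 - r π') * A (Γ0 π'))|
      = |r π * (A (Γ1 π) - A (Γ1 π')) + (1 - r π) * (A (Γ0 π) - A (Γ0 π'))
          + (r π - r π') * (A (Γ1 π') - A (Γ0 π'))| := by ring_nf
    _ ≤ r π * |A (Γ1 π) - A (Γ1 π')| + (1 - r π) * |A (Γ0 π) - A (Γ0 π')|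
          + |r π - r π'| * |A (Γ1 π') - A (Γ0 π')| := by
      refine (abs_add_three _ _ _).trans (le_of_eq ?_)
      rw [abs_mul, abs_mul, abs_mul, abs_of_pos hr, abs_of_pos hr1]
    _ ≤ c * (ρ0 * ρ1 / r π' + (1 - ρ0) * (1 - ρ1) / (1 - r π')
          + π' * (1 - π') * (ρ1 - ρ0) ^ 2 / (r π' * (1 - r π'))) := by
      linarith
    _ = c := by rw [bayes_weights_sum_eq_one hr'.ne' hr1'.ne', mul_one]

end BayesianAverage

theorem stmt8_general (p00 p10 ρ0 ρ1 β w θ11 θ01 θ00 : ℝ)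
    (hp00 : p00 ∈ Icc (0:ℝ) 1) (hp10 : p10 ∈ Icc (0:ℝ) 1)
    (hρ0 : 0 < ρ0) (hρ01 : ρ0 < ρ1) (hρ1 : ρ1 < 1)
    (hβ : β ∈ Ioo (0:ℝ) 1)
    (hθ11 : θ11 ∈ Icc (0:ℝ) 1) (hθ01 : θ01 ∈ Icc (0:ℝ) 1) (hθ00 : θ00 ∈ Icc (0:ℝ) 1)
    (V : ℝ → Bool → ℝ)
    (hVlip : ∀ y : Bool, ∀ π ∈ Icc (0:ℝ) 1, ∀ π' ∈ Icc (0:ℝ) 1,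
      |V π y - V π' y| ≤ (1 / (1 - β * |p00 - p10|)) * (ρ1 - ρ0) * |π - π'|) :
    ∀ y : Bool, ∀ π ∈ Icc (0:ℝ) 1, ∀ π' ∈ Icc (0:ℝ) 1,
      |TwOp p00 p10 ρ0 ρ1 β w θ11 θ01 θ00 V π y -
        TwOp p00 p10 ρ0 ρ1 β w θ11 θ01 θ00 V π' y|
        ≤ (1 / (1 - β * |p00 - p10|)) * (ρ1 - ρ0) * |π - π'| := by
  set D := |p00 - p10|
  set L := 1 / (1 - β * D) * (ρ1 - ρ0)
  have hD : D ≤ 1 := abs_sub_le_iff.2 ⟨by linarith [hp00.2, hp10.1], by linarith [hp00.1, hp10.2]⟩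
  have hβD : 0 < 1 - β * D := by nlinarith [hβ.1, hβ.2, abs_nonneg (p00 - p10)]
  have hL : 0 ≤ L := mul_nonneg (one_div_pos.2 hβD).le (sub_nonneg.2 hρ01.le)
  have hL_eq : (ρ1 - ρ0) + β * (L * D) = L := by
    simp only [L]; field_simp; ring
  have hmix : ∀ θ ∈ Icc (0 : ℝ) 1,
      RealLipschitzOn L (Icc 0 1) (fun π => θ * V π true + (1 - θ) * V π false) :=
    fun θ hθ => RealLipschitzOn.convex_comb (hVlip true) (hVlip false) hθ
  have hpassive : ∀ θ ∈ Icc (0 : ℝ) 1, RealLipschitzOn L (Icc 0 1) (fun π =>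
      w + β * (θ * V (gam p00 p10 π) true + (1 - θ) * V (gam p00 p10 π) false)) :=
    fun θ hθ => ((((hmix θ hθ).comp (realLipschitzOn_gam _) (mapsTo_gam hp00 hp10) hL).const_mul
      hβ.1.le).const_add w).mono (by nlinarith [hβ.1, abs_nonneg (p00 - p10)])
  have hactive : RealLipschitzOn L (Icc 0 1) (Lact1 p00 p10 ρ0 ρ1 β θ11 V) := by
    have h := (realLipschitzOn_rhoB hρ01.le _).add
      ((realLipschitzOn_bayesAverage hp00 hp10 hρ0 hρ01 hρ1 (hmix θ11 hθ11)).const_mul hβ.1.le)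
    rw [hL_eq] at h
    convert h using 2 with π
    unfold Lact1
    ring
  rintro (_ | _)
  · exact hpassive θ00 hθ00
  · exact hactive.max (hpassive θ01 hθ01)

/-- **Lipschitz preservation by the Bellman operator.** Under
`0 < p00 − p10 < 1/2` or `0 < p10 − p00 < 1`, with
`κ = 1/(1 − β|p00 − p10|)`: if `V` is bounded and `π ↦ V(π,y)` is
`κ(ρ1 − ρ0)`-Lipschitz on `[0,1]` for each `y`, then so are
`π ↦ (T_w V)(π,1)` and `π ↦ (T_w V)(π,0)`. -/
theorem stmt8 (p00 p10 ρ0 ρ1 β w θ11 θ01 θ00 : ℝ)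
    (hp00 : p00 ∈ Icc (0:ℝ) 1) (hp10 : p10 ∈ Icc (0:ℝ) 1)
    (hρ0 : 0 < ρ0) (hρ01 : ρ0 < ρ1) (hρ1 : ρ1 < 1)
    (hβ : β ∈ Ioo (0:ℝ) 1)
    (hθ11 : θ11 ∈ Icc (0:ℝ) 1) (hθ01 : θ01 ∈ Icc (0:ℝ) 1) (hθ00 : θ00 ∈ Icc (0:ℝ) 1)
    (hp : (0 < p00 - p10 ∧ p00 - p10 < 1/2) ∨ (0 < p10 - p00 ∧ p10 - p00 < 1))
    (V : ℝ → Bool → ℝ) (hVb : BddOnIcc V)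
    (hVlip : ∀ y : Bool, ∀ π ∈ Icc (0:ℝ) 1, ∀ π' ∈ Icc (0:ℝ) 1,
      |V π y - V π' y| ≤ (1 / (1 - β * |p00 - p10|)) * (ρ1 - ρ0) * |π - π'|) :
    ∀ y : Bool, ∀ π ∈ Icc (0:ℝ) 1, ∀ π' ∈ Icc (0:ℝ) 1,
      |TwOp p00 p10 ρ0 ρ1 β w θ11 θ01 θ00 V π y -
        TwOp p00 p10 ρ0 ρ1 β w θ11 θ01 θ00 V π' y|
        ≤ (1 / (1 - β * |p00 - p10|)) * (ρ1 - ρ0) * |π - π'| :=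
  stmt8_general p00 p10 ρ0 ρ1 β w θ11 θ01 θ00 hp00 hp10 hρ0 hρ01 hρ1 hβ hθ11 hθ01 hθ00 V hVlip
end
end
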